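/- Let N_1,…,N_t be row-stochastic matrices with ||N_i|| ≤ λ < 1 for all i, let δ be a vector summing to 0 with ||δ||_1 = 2δ₀, and set D = 1δ^T, M̂_i = N_i + D (assumed row-stochastic). Suppose S* is a set of coordinates with Σ_{s∈S*} δ(s) = δ₀. Then E := M̂_1⋯M̂_t − N_1⋯N_t is an error matrix, and the entries of each row of E on the columns in S* sum to at least (1 − λ/(1−λ))·δ₀. -/

import Mathlib

noncomputable def l1 {s : ℕ} (x : Fin s → ℝ) : ℝ := ∑ i, |x i|

def RowStochastic {s : ℕ} (M : Matrix (Fin s) (Fin s) ℝ) : Prop :=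
  (∀ i j, 0 ≤ M i j) ∧ ∀ i, ∑ j, M i j = 1

def IsErrorMatrix {s : ℕ} (E : Matrix (Fin s) (Fin s) ℝ) : Prop :=
  (∀ i i', E i = E i') ∧ ∀ i, ∑ j, E i j = 0

/-!
Write `D = 𝟙 δᵀ`. Since `δ` sums to zero, `δᵀ D = 0`, and since each `N_i` has unit row sums,
`N_i 𝟙 = 𝟙`; telescoping then gives `M̂_1 ⋯ M̂_t - N_1 ⋯ N_t = 𝟙 eᵀ` with
`e = ∑_k δᵀ N_{k+1} ⋯ N_t`. The term `k = t` is `δ`, which puts mass `δ₀` on `S*`; every other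
term sums to zero and has `ℓ¹`-norm at most `λ^{t-k} · 2δ₀`, so it removes at most `λ^{t-k} δ₀`
from `S*`. Summing the geometric series gives the bound.
-/

open Matrix Finset

section RowSums

variable {n R : Type*} [Fintype n] [Ring R]

theorem sum_vecMul_of_rowSums_eq_one {M : Matrix n n R} (hM : ∀ i, ∑ j, M i j = 1) (x : n → R) :
    ∑ j, (x ᵥ* M) j = ∑ i, x i := by
  simp only [vecMul, dotProduct]
  rw [sum_comm]
  simp [← mul_sum, hM]

theorem vecMul_replicateRow (x δ : n → R) : x ᵥ* replicateRow n δ = (∑ i, x i) • δ := by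
  ext j
  simp [vecMul, dotProduct, sum_mul]

theorem vecMul_add_replicateRow_of_sum_eq_zero {x : n → R} (hx : ∑ i, x i = 0)
    (A : Matrix n n R) (δ : n → R) : x ᵥ* (A + replicateRow n δ) = x ᵥ* A := by
  rw [vecMul_add, vecMul_replicateRow, hx, zero_smul, add_zero]

theorem mul_replicateRow_of_rowSums_eq_one {A : Matrix n n R} (hA : ∀ i, ∑ j, A i j = 1)
    (e : n → R) : A * replicateRow n e = replicateRow n e := by
  ext i j
  simp [mul_apply, ← sum_mul, hA]

variable [DecidableEq n] {L : List (Matrix n n R)} {δ : n → R}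

theorem sum_vecMul_prod_of_rowSums_eq_one (hL : ∀ A ∈ L, ∀ i, ∑ j, A i j = 1) (x : n → R) :
    ∑ j, (x ᵥ* L.prod) j = ∑ i, x i := by
  induction L generalizing x with
  | nil => simp
  | cons A L ih =>
    obtain ⟨hA, hL⟩ := List.forall_mem_cons.1 hL
    rw [List.prod_cons, ← vecMul_vecMul, ih hL, sum_vecMul_of_rowSums_eq_one hA]

theorem vecMul_prod_map_add_replicateRow (hL : ∀ A ∈ L, ∀ i, ∑ j, A i j = 1)
    {x : n → R} (hx : ∑ i, x i = 0) :
    x ᵥ* (L.map (· + replicateRow n δ)).prod = x ᵥ* L.prod := by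
  induction L generalizing x with
  | nil => rfl
  | cons A L ih =>
    obtain ⟨hA, hL⟩ := List.forall_mem_cons.1 hL
    rw [List.map_cons, List.prod_cons, List.prod_cons, ← vecMul_vecMul, ← vecMul_vecMul,
      vecMul_add_replicateRow_of_sum_eq_zero hx]
    exact ih hL ((sum_vecMul_of_rowSums_eq_one hA x).trans hx)

/-- For `L = [A₁, …, Aₜ]` this is `∑ₖ δᵀ Aₖ₊₁ ⋯ Aₜ`. -/
def errorRow (δ : n → R) : List (Matrix n n R) → n → R
  | [] => 0
  | _ :: L => δ ᵥ* L.prod + errorRow δ L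

theorem prod_map_add_replicateRow_sub_prod (hL : ∀ A ∈ L, ∀ i, ∑ j, A i j = 1)
    (hδ : ∑ i, δ i = 0) :
    (L.map (· + replicateRow n δ)).prod - L.prod = replicateRow n (errorRow δ L) := by
  induction L with
  | nil => simp [errorRow]
  | cons A L ih =>
    obtain ⟨hA, hL⟩ := List.forall_mem_cons.1 hL
    have hsplit : (A + replicateRow n δ) * (L.map (· + replicateRow n δ)).prod - A * L.prod
        = A * ((L.map (· + replicateRow n δ)).prod - L.prod)
          + replicateRow n δ * (L.map (· + replicateRow n δ)).prod := by
      rw [add_mul, Matrix.mul_sub]; abel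
    rw [List.map_cons, List.prod_cons, List.prod_cons, hsplit, ih hL,
      mul_replicateRow_of_rowSums_eq_one hA, ← replicateRow_vecMul,
      vecMul_prod_map_add_replicateRow hL hδ, ← replicateRow_add, errorRow, add_comm]

theorem sum_errorRow (hL : ∀ A ∈ L, ∀ i, ∑ j, A i j = 1) (hδ : ∑ i, δ i = 0) :
    ∑ j, errorRow δ L j = 0 := by
  induction L with
  | nil => simp [errorRow]
  | cons A L ih =>
    obtain ⟨-, hL⟩ := List.forall_mem_cons.1 hL
    simp only [errorRow, Pi.add_apply, sum_add_distrib, ih hL,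
      sum_vecMul_prod_of_rowSums_eq_one hL, hδ, add_zero]

end RowSums

section L1

variable {s : ℕ}

theorem neg_l1_le_two_mul_sum_of_sum_eq_zero {v : Fin s → ℝ} (hv : ∑ j, v j = 0)
    (S : Finset (Fin s)) : -l1 v ≤ 2 * ∑ a ∈ S, v a := by
  have hcompl : ∑ a ∈ S, v a + ∑ a ∈ Sᶜ, v a = 0 := (sum_add_sum_compl S v).trans hv
  have hl1 : ∑ a ∈ S, |v a| + ∑ a ∈ Sᶜ, |v a| = l1 v := sum_add_sum_compl S _
  have hS : -∑ a ∈ S, |v a| ≤ ∑ a ∈ S, v a := by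
    rw [← sum_neg_distrib]
    exact sum_le_sum fun a _ => neg_abs_le _
  have hSc : ∑ a ∈ Sᶜ, v a ≤ ∑ a ∈ Sᶜ, |v a| := sum_le_sum fun a _ => le_abs_self _
  linarith

variable {L : List (Matrix (Fin s) (Fin s) ℝ)} {lam : ℝ}

theorem l1_vecMul_prod_le (hL : ∀ A ∈ L, ∀ i, ∑ j, A i j = 1)
    (hcontr : ∀ A ∈ L, ∀ x : Fin s → ℝ, ∑ a, x a = 0 → l1 (x ᵥ* A) ≤ lam * l1 x)
    (hlam : 0 ≤ lam) {x : Fin s → ℝ} (hx : ∑ a, x a = 0) :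
    l1 (x ᵥ* L.prod) ≤ lam ^ L.length * l1 x := by
  induction L generalizing x with
  | nil => simp
  | cons A L ih =>
    obtain ⟨hA, hL⟩ := List.forall_mem_cons.1 hL
    obtain ⟨hcontrA, hcontr⟩ := List.forall_mem_cons.1 hcontr
    rw [List.prod_cons, ← vecMul_vecMul, List.length_cons, pow_succ]
    calc l1 (x ᵥ* A ᵥ* L.prod)
        ≤ lam ^ L.length * l1 (x ᵥ* A) :=
          ih hL hcontr ((sum_vecMul_of_rowSums_eq_one hA x).trans hx)
      _ ≤ lam ^ L.length * (lam * l1 x) := by gcongr; exact hcontrA x hx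
      _ = lam ^ L.length * lam * l1 x := by ring

theorem mul_one_sub_geom_sum_le_sum_errorRow (hL : ∀ A ∈ L, ∀ i, ∑ j, A i j = 1)
    (hcontr : ∀ A ∈ L, ∀ x : Fin s → ℝ, ∑ a, x a = 0 → l1 (x ᵥ* A) ≤ lam * l1 x)
    (hlam : 0 ≤ lam) (hne : L ≠ []) {δ : Fin s → ℝ} {δ₀ : ℝ} (hδ : ∑ j, δ j = 0)
    (hδl1 : l1 δ = 2 * δ₀) {S : Finset (Fin s)} (hS : ∑ a ∈ S, δ a = δ₀) :
    δ₀ * (1 - ∑ i ∈ Ico 1 L.length, lam ^ i) ≤ ∑ a ∈ S, errorRow δ L a := by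
  induction L with
  | nil => exact absurd rfl hne
  | cons A L ih =>
    obtain ⟨-, hL⟩ := List.forall_mem_cons.1 hL
    obtain ⟨-, hcontr⟩ := List.forall_mem_cons.1 hcontr
    rcases eq_or_ne L [] with rfl | hLne
    · simp [errorRow, hS]
    have hterm : -(lam ^ L.length * δ₀) ≤ ∑ a ∈ S, (δ ᵥ* L.prod) a := by
      have := neg_l1_le_two_mul_sum_of_sum_eq_zero
        ((sum_vecMul_prod_of_rowSums_eq_one hL δ).trans hδ) S
      have := l1_vecMul_prod_le hL hcontr hlam hδ
      rw [hδl1] at this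
      linarith
    have hgeom : ∑ i ∈ Ico 1 (L.length + 1), lam ^ i
        = ∑ i ∈ Ico 1 L.length, lam ^ i + lam ^ L.length :=
      sum_Ico_succ_top (List.length_pos_iff.2 hLne) _
    simp only [errorRow, List.length_cons, hgeom, Pi.add_apply, sum_add_distrib]
    linarith [ih hL hcontr hLne]

end L1

theorem stmt10_general {s t : ℕ} (ht : 1 ≤ t)
    (N Mhat : Fin t → Matrix (Fin s) (Fin s) ℝ)
    (lam : ℝ) (hlam0 : 0 ≤ lam) (hlam1 : lam < 1)
    (hN : ∀ i, RowStochastic (N i))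
    (hnorm : ∀ i, ∀ x : Fin s → ℝ, (∑ a, x a) = 0 →
      l1 (Matrix.vecMul x (N i)) ≤ lam * l1 x)
    (delta : Fin s → ℝ) (delta0 : ℝ)
    (hdsum : ∑ j, delta j = 0) (hdl1 : ∑ j, |delta j| = 2 * delta0)
    (D : Matrix (Fin s) (Fin s) ℝ) (hD : D = Matrix.of fun _ j => delta j)
    (hMhat : ∀ i, Mhat i = N i + D)
    (Sstar : Finset (Fin s)) (hS : ∑ a ∈ Sstar, delta a = delta0)
    (E : Matrix (Fin s) (Fin s) ℝ)
    (hE : E = (List.ofFn Mhat).prod - (List.ofFn N).prod) :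
    IsErrorMatrix E ∧
      ∀ i, (1 - lam / (1 - lam)) * delta0 ≤ ∑ a ∈ Sstar, E i a := by
  subst hD
  have hrows : ∀ A ∈ List.ofFn N, ∀ i, ∑ j, A i j = 1 := by
    simpa [List.mem_ofFn] using fun i => (hN i).2
  have hcontr : ∀ A ∈ List.ofFn N, ∀ x : Fin s → ℝ, ∑ a, x a = 0 → l1 (x ᵥ* A) ≤ lam * l1 x := by
    simpa [List.mem_ofFn] using hnorm
  have hMhat_list : List.ofFn Mhat = (List.ofFn N).map (· + replicateRow (Fin s) delta) := by
    rw [List.map_ofFn]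
    exact congrArg List.ofFn (funext hMhat)
  rw [hMhat_list, prod_map_add_replicateRow_sub_prod hrows hdsum] at hE
  subst hE
  refine ⟨⟨fun _ _ => rfl, fun _ => sum_errorRow hrows hdsum⟩, fun _ => ?_⟩
  have hne : List.ofFn N ≠ [] := by rw [Ne, List.ofFn_eq_nil_iff]; omega
  have hdelta0 : 0 ≤ delta0 := by
    linarith [show 0 ≤ ∑ j, |delta j| from sum_nonneg fun j _ => abs_nonneg _]
  have hgeom : ∑ i ∈ Ico 1 (List.ofFn N).length, lam ^ i ≤ lam / (1 - lam) := by
    simpa using geom_sum_Ico_le_of_lt_one (m := 1) (n := t) hlam0 hlam1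
  calc (1 - lam / (1 - lam)) * delta0
      ≤ delta0 * (1 - ∑ i ∈ Ico 1 (List.ofFn N).length, lam ^ i) := by rw [mul_comm]; gcongr
    _ ≤ _ := mul_one_sub_geom_sum_le_sum_errorRow hrows hcontr hlam0 hne hdsum hdl1 hS

theorem stmt10 {s t : ℕ} (ht : 1 ≤ t)
    (N Mhat : Fin t → Matrix (Fin s) (Fin s) ℝ)
    (lam : ℝ) (hlam0 : 0 ≤ lam) (hlam1 : lam < 1)
    (hN : ∀ i, RowStochastic (N i))
    (hnorm : ∀ i, ∀ x : Fin s → ℝ, (∑ a, x a) = 0 →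
      l1 (Matrix.vecMul x (N i)) ≤ lam * l1 x)
    (delta : Fin s → ℝ) (delta0 : ℝ)
    (hdsum : ∑ j, delta j = 0) (hdl1 : ∑ j, |delta j| = 2 * delta0)
    (D : Matrix (Fin s) (Fin s) ℝ) (hD : D = Matrix.of fun _ j => delta j)
    (hMhat : ∀ i, Mhat i = N i + D)
    (hMhatRS : ∀ i, RowStochastic (Mhat i))
    (Sstar : Finset (Fin s)) (hS : ∑ a ∈ Sstar, delta a = delta0)
    (E : Matrix (Fin s) (Fin s) ℝ)
    (hE : E = (List.ofFn Mhat).prod - (List.ofFn N).prod) :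
    IsErrorMatrix E ∧
      ∀ i, (1 - lam / (1 - lam)) * delta0 ≤ ∑ a ∈ Sstar, E i a :=
  stmt10_general ht N Mhat lam hlam0 hlam1 hN hnorm delta delta0 hdsum hdl1 D hD hMhat Sstar hS E hE
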